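/- arXiv:1811.05246 — 2 statements merged into one kernel-verified Lean document; each statement's English description precedes it below -/
import Mathlib

section
/- Let u ∈ {1, -1}, Q ≥ 5 a real number, and N a non-negative integer. Then there exist N+1 distinct primes p₁, …, p_{N+1}, all greater than Q and all congruent to ±1 mod 8, and an integer n with P² < n < 2P² (where P = p₁⋯p_{N+1}), such that 3n² ≡ m_j (mod p_j²) for j = 1, …, N+1, where m_j is the least positive integer with 2m_j ≡ 3 (mod p_j) and m_j ≡ u (mod 3). -/
/-!
For a prime `p ≡ ±1 (mod 8)` the residue `2` is a square, say `s² = 2`, and then `x = s⁻¹`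
solves `3x² = 3/2 ≡ m (mod p)`. Since `p ∤ 6x`, one Hensel step lifts `x` to a solution
modulo `p²`. Dirichlet's theorem for primes `≡ 1 (mod 8)` supplies as many such primes above `Q`
as we like, the Chinese remainder theorem glues the local solutions modulo the coprime `p_j²`, and
the resulting class modulo `P²` is not `0`, so it has a representative in `(P², 2P²)`.
-/

open Filter Function

theorem Nat.infinite_setOf_prime_modEq_one_gt {k : ℕ} (hk : k ≠ 0) (Q : ℝ) :
    {p : ℕ | p.Prime ∧ p ≡ 1 [MOD k] ∧ Q < p}.Infinite := by
  have hQ : ∀ᶠ p : ℕ in atTop, Q < p := tendsto_natCast_atTop_atTop.eventually_gt_atTop Q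
  simpa only [and_assoc] using
    Nat.frequently_atTop_iff_infinite.1 ((Nat.frequently_atTop_modEq_one hk).and_eventually hQ)

theorem Nat.exists_injective_prime_modEq_one_gt {k : ℕ} (hk : k ≠ 0) (Q : ℝ) (N : ℕ) :
    ∃ p : Fin N → ℕ, Injective p ∧ ∀ j, (p j).Prime ∧ p j ≡ 1 [MOD k] ∧ Q < p j := by
  have hS := infinite_setOf_prime_modEq_one_gt hk Q
  exact ⟨fun j ↦ hS.natEmbedding _ j,
    Subtype.val_injective.comp ((hS.natEmbedding _).injective.comp Fin.val_injective),
    fun j ↦ (hS.natEmbedding _ j).2⟩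

theorem Nat.Prime.three_lt_of_mod_eight {p : ℕ} (hp : p.Prime) (h8 : p % 8 = 1 ∨ p % 8 = 7) :
    3 < p := by
  have := hp.two_le
  omega

theorem Nat.Prime.isCoprime_intCast {p q : ℕ} (hp : p.Prime) (hq : q.Prime) (hpq : p ≠ q) :
    IsCoprime (p : ℤ) q :=
  Nat.isCoprime_iff_coprime.2 ((Nat.coprime_primes hp hq).2 hpq)

namespace Int

theorem exists_pos_modEq (x : ℤ) {d : ℤ} (hd : d ≠ 0) : ∃ m, 0 < m ∧ m ≡ x [ZMOD d] := by
  refine ⟨x % d + |d|, by have := emod_nonneg x hd; positivity, ?_⟩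
  simpa using (mod_modEq x d).add (modEq_zero_iff_dvd.2 ((dvd_abs d d).2 dvd_rfl))

theorem exists_modEq_mem_Ioo (n : ℤ) {d : ℤ} (hd : 0 < d) (hn : ¬ d ∣ n) :
    ∃ k, d < k ∧ k < 2 * d ∧ k ≡ n [ZMOD d] := by
  have hpos : 0 < n % d :=
    (emod_nonneg n hd.ne').lt_of_ne fun h ↦ hn (dvd_of_emod_eq_zero h.symm)
  refine ⟨n % d + d, by linarith, by linarith [emod_lt_of_pos n hd], ?_⟩
  simpa using (mod_modEq n d).add (modEq_zero_iff_dvd.2 (dvd_refl d))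

theorem exists_modEq_and_modEq {a b : ℤ} (h : IsCoprime a b) (r s : ℤ) :
    ∃ n : ℤ, n ≡ r [ZMOD a] ∧ n ≡ s [ZMOD b] := by
  obtain ⟨x, y, hxy⟩ := h
  exact ⟨s * (x * a) + r * (y * b),
    modEq_iff_dvd.2 ⟨x * (r - s), by linear_combination (-r) * hxy⟩,
    modEq_iff_dvd.2 ⟨y * (s - r), by linear_combination (-s) * hxy⟩⟩

theorem exists_modEq_of_pairwise_isCoprime {ι : Type*} [Finite ι] {d : ι → ℤ}
    (hd : Pairwise (IsCoprime on d)) (x : ι → ℤ) : ∃ n : ℤ, ∀ i, n ≡ x i [ZMOD d i] := by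
  have hI : Pairwise (IsCoprime on fun i ↦ Ideal.span {d i}) := fun i j hij ↦
    (Ideal.isCoprime_span_singleton_iff _ _).2 (hd hij)
  obtain ⟨n, hn⟩ := Ideal.exists_forall_sub_mem_ideal hI x
  exact ⟨n, fun i ↦ (modEq_iff_dvd.2 (Ideal.mem_span_singleton.1 (hn i))).symm⟩

theorem exists_mul_sq_modEq_sq {a m x p : ℤ} (hx : a * x ^ 2 ≡ m [ZMOD p])
    (hcop : IsCoprime (2 * a * x) p) : ∃ y, y ≡ x [ZMOD p] ∧ a * y ^ 2 ≡ m [ZMOD p ^ 2] := by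
  obtain ⟨k, hk⟩ := modEq_iff_dvd.1 hx.symm
  obtain ⟨c, e, hce⟩ := hcop
  -- Newton's step `y = x - f(x) / f'(x)` for `f = aX² - m`, with `c` inverting `f'(x)` mod `p`.
  exact ⟨x - c * k * p, modEq_iff_dvd.2 ⟨c * k, by ring⟩,
    modEq_iff_dvd.2 ⟨-(k * e + a * c ^ 2 * k ^ 2), by linear_combination (-1) * hk + p * k * hce⟩⟩

end Int

theorem exists_isLeast_two_mul_modEq {p : ℤ} (h2 : IsCoprime 2 p) (h3 : IsCoprime p 3) (u : ℤ) :
    ∃ m, IsLeast {m : ℤ | 0 < m ∧ 2 * m ≡ 3 [ZMOD p] ∧ m ≡ u [ZMOD 3]} m := by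
  obtain ⟨a, b, hab⟩ := h2
  have hp : p ≠ 0 := by
    rintro rfl
    omega
  have h3a : 2 * (3 * a) ≡ 3 [ZMOD p] :=
    Int.modEq_iff_dvd.2 ⟨3 * b, by linear_combination (-3) * hab⟩
  obtain ⟨m₀, hm₀p, hm₀3⟩ := Int.exists_modEq_and_modEq h3 (3 * a) u
  obtain ⟨m, hm, hmm₀⟩ := Int.exists_pos_modEq m₀ (mul_ne_zero hp three_ne_zero)
  have hmem : 0 < m ∧ 2 * m ≡ 3 [ZMOD p] ∧ m ≡ u [ZMOD 3] :=
    ⟨hm, (((hmm₀.of_mul_right 3).trans hm₀p).mul_left 2).trans h3a,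
      (hmm₀.of_mul_left p).trans hm₀3⟩
  obtain ⟨m', hm', hmin⟩ := Int.exists_least_of_bdd
    (P := fun z ↦ 0 < z ∧ 2 * z ≡ 3 [ZMOD p] ∧ z ≡ u [ZMOD 3]) ⟨0, fun z hz ↦ hz.1.le⟩ ⟨m, hmem⟩
  exact ⟨m', hm', hmin⟩

namespace ZMod

theorem natCast_ne_zero_of_pos_of_lt {p k : ℕ} (hk : 0 < k) (hkp : k < p) : (k : ZMod p) ≠ 0 := by
  rw [Ne, natCast_eq_zero_iff]
  exact fun h ↦ (Nat.le_of_dvd hk h).not_gt hkp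

theorem exists_three_mul_sq_eq {p : ℕ} [Fact p.Prime] (h8 : p % 8 = 1 ∨ p % 8 = 7) {m : ZMod p}
    (hm : 2 * m = 3) : ∃ x : ZMod p, 3 * x ^ 2 = m := by
  have h3 := (Fact.out : p.Prime).three_lt_of_mod_eight h8
  have h2 : (2 : ZMod p) ≠ 0 := by exact_mod_cast natCast_ne_zero_of_pos_of_lt two_pos (by omega)
  obtain ⟨s, hs⟩ := (exists_sq_eq_two_iff (by omega)).2 h8
  refine ⟨s⁻¹, ?_⟩
  rw [inv_pow, sq, ← hs, ← hm]
  field_simp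

end ZMod

theorem exists_three_mul_sq_modEq_sq {p : ℕ} (hp : p.Prime) (h8 : p % 8 = 1 ∨ p % 8 = 7) {m : ℤ}
    (hm : 2 * m ≡ 3 [ZMOD p]) : ∃ n : ℤ, ¬ (p : ℤ) ∣ n ∧ 3 * n ^ 2 ≡ m [ZMOD (p : ℤ) ^ 2] := by
  have := Fact.mk hp
  have h3 : (3 : ZMod p) ≠ 0 := by
    exact_mod_cast ZMod.natCast_ne_zero_of_pos_of_lt three_pos (hp.three_lt_of_mod_eight h8)
  have hmp : 2 * (m : ZMod p) = 3 := by exact_mod_cast (ZMod.intCast_eq_intCast_iff _ _ _).2 hm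
  obtain ⟨x, hx⟩ := ZMod.exists_three_mul_sq_eq h8 hmp
  obtain ⟨n, rfl⟩ := ZMod.intCast_surjective x
  have h6n : ((2 * 3 * n : ℤ) : ZMod p) ≠ 0 := by
    intro h
    apply h3
    rw [← hmp, ← hx]
    push_cast at h
    linear_combination (n : ZMod p) * h
  have hcop : IsCoprime (2 * 3 * n) (p : ℤ) := by
    rw [isCoprime_comm, (Nat.prime_iff_prime_int.1 hp).coprime_iff_not_dvd,
      ← ZMod.intCast_zmod_eq_zero_iff_dvd]
    exact h6n
  obtain ⟨y, hyn, hy⟩ := Int.exists_mul_sq_modEq_sq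
    ((ZMod.intCast_eq_intCast_iff _ _ _).1 (by push_cast; exact hx)) hcop
  refine ⟨y, fun hpy ↦ h6n ?_, hy⟩
  rw [ZMod.intCast_zmod_eq_zero_iff_dvd]
  exact dvd_mul_of_dvd_right (hyn.dvd_iff.1 hpy) _

theorem stmt_2_general (u : ℤ) (Q : ℝ) (N : ℕ) :
    ∃ p : Fin (N + 1) → ℕ, Function.Injective p ∧
      (∀ j, (p j).Prime ∧ Q < (p j : ℝ) ∧ (p j % 8 = 1 ∨ p j % 8 = 7)) ∧
      ∃ n : ℤ, (∏ j, (p j : ℤ)) ^ 2 < n ∧ n < 2 * (∏ j, (p j : ℤ)) ^ 2 ∧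
        ∀ j, ∀ m : ℤ,
          IsLeast {m : ℤ | 0 < m ∧ 2 * m ≡ 3 [ZMOD (p j : ℤ)] ∧ m ≡ u [ZMOD 3]} m →
          3 * n ^ 2 ≡ m [ZMOD (p j : ℤ) ^ 2] := by
  obtain ⟨p, hp_inj, hp⟩ := Nat.exists_injective_prime_modEq_one_gt (k := 8) (by norm_num) Q (N + 1)
  have h8 : ∀ j, p j % 8 = 1 ∨ p j % 8 = 7 := fun j ↦ Or.inl (hp j).2.1
  have h3 : ∀ j, 3 < p j := fun j ↦ (hp j).1.three_lt_of_mod_eight (h8 j)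
  have h2p : ∀ j, IsCoprime 2 (p j : ℤ) := fun j ↦ by
    exact_mod_cast Nat.prime_two.isCoprime_intCast (hp j).1 (by have := h3 j; omega)
  have hp3 : ∀ j, IsCoprime (p j : ℤ) 3 := fun j ↦ by
    exact_mod_cast (hp j).1.isCoprime_intCast Nat.prime_three (h3 j).ne'
  choose m hm using fun j ↦ exists_isLeast_two_mul_modEq (h2p j) (hp3 j) u
  choose x hx_ndvd hx using fun j ↦ exists_three_mul_sq_modEq_sq (hp j).1 (h8 j) (hm j).1.2.1
  have hcop : Pairwise (IsCoprime on fun j ↦ (p j : ℤ) ^ 2) := fun i j hij ↦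
    ((hp i).1.isCoprime_intCast (hp j).1 (hp_inj.ne hij)).pow
  obtain ⟨n₀, hn₀⟩ := Int.exists_modEq_of_pairwise_isCoprime hcop x
  set P := ∏ j, (p j : ℤ)
  have hdvd : ∀ j, (p j : ℤ) ^ 2 ∣ P ^ 2 := fun j ↦
    pow_dvd_pow_of_dvd (Finset.dvd_prod_of_mem _ (Finset.mem_univ j)) 2
  have hP : 0 < P ^ 2 := pow_pos (Finset.prod_pos fun j _ ↦ mod_cast (hp j).1.pos) 2
  have hn₀_ndvd : ¬ (p 0 : ℤ) ∣ n₀ :=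
    mt ((hn₀ 0).of_dvd (dvd_pow_self _ two_ne_zero)).dvd_iff.1 (hx_ndvd 0)
  obtain ⟨n, hPn, hnP, hn⟩ := Int.exists_modEq_mem_Ioo n₀ hP
    fun h ↦ hn₀_ndvd (((dvd_pow_self _ two_ne_zero).trans (hdvd 0)).trans h)
  refine ⟨p, hp_inj, fun j ↦ ⟨(hp j).1, (hp j).2.2, h8 j⟩, n, hPn, hnP, fun j m' hm' ↦ ?_⟩
  rw [hm'.unique (hm j)]
  exact ((((hn.of_dvd (hdvd j)).trans (hn₀ j)).pow 2).mul_left 3).trans (hx j)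

theorem stmt_2 (u : ℤ) (hu : u = 1 ∨ u = -1) (Q : ℝ) (hQ : 5 ≤ Q) (N : ℕ) :
    ∃ p : Fin (N + 1) → ℕ, Function.Injective p ∧
      (∀ j, (p j).Prime ∧ Q < (p j : ℝ) ∧ (p j % 8 = 1 ∨ p j % 8 = 7)) ∧
      ∃ n : ℤ, (∏ j, (p j : ℤ)) ^ 2 < n ∧ n < 2 * (∏ j, (p j : ℤ)) ^ 2 ∧
        ∀ j, ∀ m : ℤ,
          IsLeast {m : ℤ | 0 < m ∧ 2 * m ≡ 3 [ZMOD (p j : ℤ)] ∧ m ≡ u [ZMOD 3]} m →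
          3 * n ^ 2 ≡ m [ZMOD (p j : ℤ) ^ 2] :=
  stmt_2_general u Q N
end

section
/- For every positive integer N, the identity M(N²)/N² + Σ_{m=1}^N Σ_{n=1}^N K(m/N, n/N) μ(m)μ(n)/N² = M(N)(M(N)+4)/(2N²) - (Σ_{m=1}^N μ(m)/m)² holds, where K(x,y) = 1/2 + ⌊1/(xy)⌋ - 1/(xy) and M(x) = Σ_{n ≤ x} μ(n) denotes the Mertens function. -/
open ArithmeticFunction
open scoped ArithmeticFunction.Moebius

noncomputable def K (x y : ℝ) : ℝ := 1 / 2 + ⌊1 / (x * y)⌋ - 1 / (x * y)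

def M (n : ℕ) : ℤ := ∑ k ∈ Finset.Icc 1 n, μ k

/-!
Since `K (m / N) (n / N) = 1/2 + ⌊N² / mn⌋ - N² / mn`, the identity reduces to the integer identity
`∑_{m, n ≤ N} μ(m) μ(n) ⌊N² / mn⌋ = 2 M(N) - M(N²)`. This is the hyperbola method applied to
`∑_{n ≤ x} μ(n) ⌊x / n⌋ = 1`: summing `μ(m) μ(n) ⌊x / mn⌋` over `m, n ≤ x` row by row gives `M(x)`,
and over `m ≤ y, n ≤ x` gives `M(y)`; the block `m, n > y` vanishes as soon as `x < (y + 1)²`, and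
the two off-diagonal blocks agree by symmetry. Take `x = N²`, `y = N`.
-/

open Finset

theorem sum_Icc_moebius_mul_div {x L : ℕ} (hx : 1 ≤ x) (hxL : x ≤ L) :
    ∑ n ∈ Icc 1 L, (μ n : ℤ) * (x / n : ℕ) = 1 := by
  have hvanish : ∀ n ∈ Icc 1 L, n ∉ Icc 1 x → (μ n : ℤ) * (x / n : ℕ) = 0 := by
    intro n hnL hnx
    simp only [mem_Icc] at hnL hnx
    simp [Nat.div_eq_of_lt (by omega : x < n)]
  rw [← sum_subset (Icc_subset_Icc_right hxL) hvanish, ← zero_add 1, Icc_add_one_left_eq_Ioc,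
    ← sum_Ioc_mul_zeta_eq_sum, moebius_mul_coe_zeta]
  simp [one_apply]
  omega

theorem sum_sum_add_sum_sum_eq_two_nsmul_of_symm {ι R : Type*} [DecidableEq ι] [AddCommMonoid R]
    {s t : Finset ι} (hst : s ⊆ t) {f : ι → ι → R} (hsymm : ∀ m n, f m n = f n m)
    (hvanish : ∀ m ∈ t \ s, ∀ n ∈ t \ s, f m n = 0) :
    ∑ m ∈ t, ∑ n ∈ t, f m n + ∑ m ∈ s, ∑ n ∈ s, f m n = 2 • ∑ m ∈ s, ∑ n ∈ t, f m n := by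
  have hsplit : ∀ m, ∑ n ∈ t, f m n = ∑ n ∈ t \ s, f m n + ∑ n ∈ s, f m n := fun m =>
    (sum_sdiff hst).symm
  have hcorner : ∑ m ∈ t \ s, ∑ n ∈ t \ s, f m n = 0 :=
    sum_eq_zero fun m hm => sum_eq_zero fun n hn => hvanish m hm n hn
  have hflip : ∑ m ∈ t \ s, ∑ n ∈ s, f m n = ∑ m ∈ s, ∑ n ∈ t \ s, f m n := by
    rw [sum_comm]; simp only [hsymm]
  rw [← sum_sdiff hst (f := fun m => ∑ n ∈ t, f m n)]
  simp only [hsplit, sum_add_distrib, hcorner, hflip]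
  abel

theorem sum_Icc_sum_Icc_moebius_mul_moebius_mul_div {x y : ℕ} (hyx : y ≤ x)
    (hxy : x < (y + 1) ^ 2) :
    ∑ m ∈ Icc 1 y, ∑ n ∈ Icc 1 y, (μ m : ℤ) * μ n * (x / (m * n) : ℕ) = 2 * M y - M x := by
  have hrow : ∀ m ∈ Icc 1 x, ∑ n ∈ Icc 1 x, (μ m : ℤ) * μ n * (x / (m * n) : ℕ) = μ m := by
    intro m hm
    simp only [mem_Icc] at hm
    simp_rw [mul_assoc, ← mul_sum, ← Nat.div_div_eq_div_mul,
      sum_Icc_moebius_mul_div ((Nat.one_le_div_iff hm.1).mpr hm.2) (Nat.div_le_self x m), mul_one]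
  have hcorner : ∀ m ∈ Icc 1 x \ Icc 1 y, ∀ n ∈ Icc 1 x \ Icc 1 y,
      (μ m : ℤ) * μ n * (x / (m * n) : ℕ) = 0 := by
    intro m hm n hn
    simp only [mem_sdiff, mem_Icc] at hm hn
    have hlt : x < m * n := hxy.trans_le (by rw [sq]; exact Nat.mul_le_mul (by omega) (by omega))
    simp [Nat.div_eq_of_lt hlt]
  have hsub : Icc 1 y ⊆ Icc 1 x := Icc_subset_Icc_right hyx
  have key := sum_sum_add_sum_sum_eq_two_nsmul_of_symm hsub
    (fun m n => by simp only [mul_comm m n, mul_comm (μ m : ℤ)]) hcorner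
  rw [sum_congr rfl hrow, sum_congr rfl fun m hm => hrow m (hsub hm), two_nsmul] at key
  rw [M, M]
  linarith

theorem K_natCast_div_natCast (a b N : ℕ) :
    K (a / N) (b / N) = 1 / 2 + (N ^ 2 / (a * b) : ℕ) - (N : ℝ) ^ 2 / (a * b) := by
  have hrecip : 1 / ((a / N : ℝ) * (b / N)) = ((N ^ 2 : ℕ) : ℝ) / ((a * b : ℕ) : ℝ) := by
    rw [div_mul_div_comm, one_div_div]
    push_cast
    ring
  have hfloor : ⌊((N ^ 2 : ℕ) : ℝ) / ((a * b : ℕ) : ℝ)⌋ = ((N ^ 2 / (a * b) : ℕ) : ℤ) := by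
    rw [Int.floor_div_natCast, Int.floor_natCast]
    norm_cast
  rw [K, hrecip, hfloor, Int.cast_natCast, Nat.cast_pow, Nat.cast_mul]

theorem stmt_15_general (N : ℕ) :
    (M (N ^ 2) : ℝ) / (N : ℝ) ^ 2 +
      ∑ m ∈ Finset.Icc 1 N, ∑ n ∈ Finset.Icc 1 N,
        K ((m : ℝ) / N) ((n : ℝ) / N) * ((μ m : ℝ) * (μ n : ℝ)) / (N : ℝ) ^ 2 =
    (M N : ℝ) * ((M N : ℝ) + 4) / (2 * (N : ℝ) ^ 2) -
      (∑ m ∈ Finset.Icc 1 N, (μ m : ℝ) / m) ^ 2 := by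
  have hterm : ∀ m ∈ Icc 1 N, ∀ n ∈ Icc 1 N,
      K (m / N) (n / N) * ((μ m : ℝ) * μ n) / (N : ℝ) ^ 2 =
        ((μ m : ℝ) * μ n / 2 + (μ m : ℝ) * μ n * (N ^ 2 / (m * n) : ℕ)) / (N : ℝ) ^ 2 -
          (μ m : ℝ) / m * (μ n / n) := by
    intro m hm n hn
    rw [mem_Icc] at hm hn
    have hm0 : (m : ℝ) ≠ 0 := Nat.cast_ne_zero.mpr (by omega)
    have hn0 : (n : ℝ) ≠ 0 := Nat.cast_ne_zero.mpr (by omega)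
    have hN0 : (N : ℝ) ≠ 0 := Nat.cast_ne_zero.mpr (by omega)
    rw [K_natCast_div_natCast]
    field_simp
  have hhyperbola : ∑ m ∈ Icc 1 N, ∑ n ∈ Icc 1 N, (μ m : ℝ) * μ n * (N ^ 2 / (m * n) : ℕ) =
      2 * M N - M (N ^ 2) := by
    have := congrArg (Int.cast : ℤ → ℝ) <| sum_Icc_sum_Icc_moebius_mul_moebius_mul_div
      (Nat.le_self_pow two_ne_zero N) (Nat.pow_lt_pow_left N.lt_add_one two_ne_zero)
    simpa only [Int.cast_sum, Int.cast_mul, Int.cast_natCast, Int.cast_sub, Int.cast_ofNat]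
  have hM : (M N : ℝ) = ∑ m ∈ Icc 1 N, (μ m : ℝ) := by simp [M]
  rw [sum_congr rfl fun m hm => sum_congr rfl (hterm m hm)]
  simp only [sum_sub_distrib, ← sum_div, sum_add_distrib, ← sum_mul_sum, ← sq, hhyperbola, ← hM]
  ring

theorem stmt_15 (N : ℕ) (hN : 0 < N) :
    (M (N ^ 2) : ℝ) / (N : ℝ) ^ 2 +
      ∑ m ∈ Finset.Icc 1 N, ∑ n ∈ Finset.Icc 1 N,
        K ((m : ℝ) / N) ((n : ℝ) / N) * ((μ m : ℝ) * (μ n : ℝ)) / (N : ℝ) ^ 2 =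
    (M N : ℝ) * ((M N : ℝ) + 4) / (2 * (N : ℝ) ^ 2) -
      (∑ m ∈ Finset.Icc 1 N, (μ m : ℝ) / m) ^ 2 :=
  stmt_15_general N
end
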